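/- arXiv:2309.11606 — 3 statements merged into one kernel-verified Lean document; each statement's English description precedes it below -/
import Mathlib

section
/- A connected cubic graph has a spanning tree all of whose cotree components have an even number of edges if and only if its vertex set can be partitioned into sets A and J such that A induces a tree and J is an independent set. -/
/-!
Every vertex of the cotree `G \ T` of a spanning tree of a cubic graph has degree at most 2. Such
a graph has an even number of edges in each component iff its edges split into cherries (paths of
length two) whose centres `J` meet every edge exactly once; this is shown by removing one cherry at
a time. The centres are leaves of `T`, pairwise non-adjacent in `G`, and `G[Jᶜ] = T[Jᶜ]` is a tree.
Conversely, attaching every vertex of an independent `J` as a leaf to one of its neighbours turns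
the tree `G[A]` into a spanning tree whose cotree is the union of the cherries centred at `J`.
-/

open SimpleGraph Finset

/-- The set of edges of `H` lying in the connected component `c` of `H`. -/
def cotreeCompEdges {V : Type*} (H : SimpleGraph V) (c : H.ConnectedComponent) :
    Set (Sym2 V) :=
  {e | e ∈ H.edgeSet ∧ ∀ v ∈ e, H.connectedComponentMk v = c}

namespace SimpleGraph

section EvenParts

variable {V : Type*} {H : SimpleGraph V} {S K : Finset V}

/-- `S` is a union of connected components of `H`. -/
def AdjClosed (H : SimpleGraph V) (S : Finset V) : Prop :=
  ∀ ⦃a b⦄, H.Adj a b → a ∈ S → b ∈ S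

lemma AdjClosed.mem_of_reachable (hS : H.AdjClosed S) {a b : V} (hab : H.Reachable a b)
    (ha : a ∈ S) : b ∈ S := by
  obtain ⟨p⟩ := hab
  induction p with
  | nil => exact ha
  | cons h _ ih => exact ih (hS h ha)

lemma adjClosed_of_forall_mem_iff {c : H.ConnectedComponent}
    (hSc : ∀ v, v ∈ S ↔ H.connectedComponentMk v = c) : H.AdjClosed S := fun _ _ hab ha =>
  (hSc _).2 <| (ConnectedComponent.connectedComponentMk_eq_of_adj hab).symm.trans ((hSc _).1 ha)

lemma AdjClosed.of_agree {S' : Finset V} (hSS' : ∀ ⦃x y⦄, H.Adj x y → (x ∈ S ↔ x ∈ S'))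
    (hS : H.AdjClosed S) : H.AdjClosed S' := fun _ _ hab ha =>
  (hSS' hab.symm).1 (hS hab ((hSS' hab).2 ha))

variable [DecidableEq V]

lemma AdjClosed.sdiff (hS : H.AdjClosed S) (hK : H.AdjClosed K) : H.AdjClosed (S \ K) :=
  fun _ _ hab ha => Finset.mem_sdiff.2
    ⟨hS hab (Finset.mem_sdiff.1 ha).1, fun hb => (Finset.mem_sdiff.1 ha).2 (hK hab.symm hb)⟩

variable [Fintype V] [DecidableRel H.Adj]

variable (H) in
/-- Phrased for unions of components, which behave better than components under edge deletion. -/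
def HasEvenParts : Prop :=
  ∀ S, H.AdjClosed S → Even #(H.edgeFinset ∩ S.sym2)

variable (H) in
/-- The edges of `H` are partitioned into the cherries (paths of length two) centred at the
vertices of `J`. -/
def IsCherryCover (J : Finset V) : Prop :=
  (∀ j ∈ J, H.degree j = 2) ∧ ∀ ⦃x y⦄, H.Adj x y → (x ∈ J ↔ y ∉ J)

lemma AdjClosed.sum_degree_eq (hS : H.AdjClosed S) :
    ∑ x ∈ S, H.degree x = 2 * #(H.edgeFinset ∩ S.sym2) := by
  classical
  set K := H.deleteEdges (↑S.sym2)ᶜ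
  have hKadj : ∀ a b, K.Adj a b ↔ H.Adj a b ∧ a ∈ S ∧ b ∈ S := by
    simp [K]
  have hdeg : ∀ x, K.degree x = if x ∈ S then H.degree x else 0 := by
    intro x
    split_ifs with hx
    · simp only [← card_neighborFinset_eq_degree]
      congr 1
      ext y
      simpa [hKadj, hx] using fun h => hS h hx
    · simp [← card_neighborFinset_eq_degree, Finset.eq_empty_iff_forall_notMem, hKadj, hx]
  have hedges : K.edgeFinset = H.edgeFinset ∩ S.sym2 := by
    ext ⟨a, b⟩; simp [K, edgeSet_deleteEdges]
  rw [← hedges, ← sum_degrees_eq_twice_card_edges, ← Finset.sum_filter_add_sum_filter_not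
    Finset.univ (· ∈ S)]
  simp [hdeg]

lemma AdjClosed.even_sum_degree (hS : H.AdjClosed S) : Even (∑ x ∈ S, H.degree x) :=
  hS.sum_degree_eq ▸ even_two_mul _

lemma AdjClosed.card_edges_eq_add (hK : H.AdjClosed K) (hKS : K ⊆ S) :
    #(H.edgeFinset ∩ S.sym2) = #(H.edgeFinset ∩ K.sym2) + #(H.edgeFinset ∩ (S \ K).sym2) := by
  rw [← Finset.card_filter_add_card_filter_not (s := H.edgeFinset ∩ S.sym2) (· ∈ K.sym2)]
  congr 2 <;> ext ⟨a, b⟩ <;>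
    simp only [Finset.mem_filter, Finset.mem_inter, mem_edgeFinset, mem_edgeSet,
      Finset.mk_mem_sym2_iff, Finset.mem_sdiff]
  · exact ⟨fun h => ⟨h.1.1, h.2⟩, fun h => ⟨⟨h.1, hKS h.2.1, hKS h.2.2⟩, h.2⟩⟩
  · exact ⟨fun ⟨⟨hab, ha, hb⟩, h⟩ => ⟨hab, ⟨ha, fun haK => h ⟨haK, hK hab haK⟩⟩,
      ⟨hb, fun hbK => h ⟨hK hab.symm hbK, hbK⟩⟩⟩,
      fun ⟨hab, ⟨ha, haK⟩, ⟨hb, _⟩⟩ => ⟨⟨hab, ha, hb⟩, fun h => haK h.1⟩⟩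

lemma cotreeCompEdges_eq_of_forall_mem_iff {c : H.ConnectedComponent}
    (hSc : ∀ v, v ∈ S ↔ H.connectedComponentMk v = c) :
    cotreeCompEdges H c = ↑(H.edgeFinset ∩ S.sym2) := by
  ext ⟨a, b⟩
  simp [cotreeCompEdges, hSc]

theorem hasEvenParts_iff_even_cotreeCompEdges :
    H.HasEvenParts ↔ ∀ c : H.ConnectedComponent, Even (cotreeCompEdges H c).ncard := by
  classical
  constructor
  · intro h c
    have hSc : ∀ v, v ∈ Finset.univ.filter (H.connectedComponentMk · = c) ↔
        H.connectedComponentMk v = c := by simp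
    rw [cotreeCompEdges_eq_of_forall_mem_iff hSc, Set.ncard_coe_finset]
    exact h _ (adjClosed_of_forall_mem_iff hSc)
  · intro h S hS
    induction S using Finset.strongInduction with
    | H S ih =>
      obtain rfl | ⟨x, hx⟩ := S.eq_empty_or_nonempty
      · simp
      set K := S.filter (H.Reachable x)
      have hKc : ∀ v, v ∈ K ↔ H.connectedComponentMk v = H.connectedComponentMk x := by
        simp only [K, Finset.mem_filter, ConnectedComponent.eq]
        exact fun v => ⟨fun h => h.2.symm, fun h => ⟨hS.mem_of_reachable h.symm hx, h.symm⟩⟩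
      have hK := adjClosed_of_forall_mem_iff hKc
      rw [hK.card_edges_eq_add (Finset.filter_subset _ _)]
      refine Even.add ?_ (ih _ (Finset.sdiff_ssubset (Finset.filter_subset _ _) ?_) (hS.sdiff hK))
      · have := h (H.connectedComponentMk x)
        rwa [cotreeCompEdges_eq_of_forall_mem_iff hKc, Set.ncard_coe_finset] at this
      · exact ⟨x, Finset.mem_filter.2 ⟨hx, Reachable.refl x⟩⟩

lemma IsCherryCover.hasEvenParts {J : Finset V} (hJ : H.IsCherryCover J) : H.HasEvenParts := by
  intro S hS
  have hsplit : H.edgeFinset ∩ S.sym2 = (S ∩ J).biUnion (H.incidenceFinset ·) := by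
    ext ⟨a, b⟩
    simp only [Finset.mem_inter, mem_edgeFinset, mem_edgeSet, Finset.mk_mem_sym2_iff,
      Finset.mem_biUnion, mem_incidenceFinset, mk'_mem_incidenceSet_iff]
    constructor
    · rintro ⟨hab, ha, hb⟩
      by_cases haJ : a ∈ J
      · exact ⟨a, ⟨ha, haJ⟩, hab, .inl rfl⟩
      · exact ⟨b, ⟨hb, by simpa [haJ] using hJ.2 hab⟩, hab, .inr rfl⟩
    · rintro ⟨j, ⟨hj, -⟩, hab, rfl | rfl⟩
      · exact ⟨hab, hj, hS hab hj⟩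
      · exact ⟨hab, hS hab.symm hj, hj⟩
  rw [hsplit, Finset.card_biUnion]
  · rw [Finset.sum_congr rfl fun j hj => by
      rw [card_incidenceFinset_eq_degree, hJ.1 j (Finset.mem_inter.1 hj).2]]
    simp
  · intro i hi j hj hij
    refine Finset.disjoint_left.2 fun e hei hej => ?_
    rw [mem_incidenceFinset] at hei hej
    have : e = s(i, j) := (Sym2.mem_and_mem_iff hij).1 ⟨hei.2, hej.2⟩
    exact (hJ.2 (by rw [this] at hei; exact hei.1)).1 (Finset.mem_inter.1 hi).2
      (Finset.mem_inter.1 hj).2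

lemma edgeFinset_inter_sym2_eq_of_agree {S' : Finset V}
    (hSS' : ∀ ⦃x y⦄, H.Adj x y → (x ∈ S ↔ x ∈ S')) :
    H.edgeFinset ∩ S.sym2 = H.edgeFinset ∩ S'.sym2 := by
  ext ⟨a, b⟩
  simp only [Finset.mem_inter, mem_edgeFinset, mem_edgeSet, Finset.mk_mem_sym2_iff]
  exact ⟨fun ⟨hab, ha, hb⟩ => ⟨hab, (hSS' hab).1 ha, (hSS' hab.symm).1 hb⟩,
    fun ⟨hab, ha, hb⟩ => ⟨hab, (hSS' hab).2 ha, (hSS' hab.symm).2 hb⟩⟩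

section DeleteIncidenceSet

variable {v u w : V}

lemma neighborFinset_deleteIncidenceSet {x : V} (hx : x ≠ v) :
    (H.deleteIncidenceSet v).neighborFinset x = (H.neighborFinset x).erase v := by
  ext y
  simp [deleteIncidenceSet_adj, hx, and_comm]

lemma degree_deleteIncidenceSet_self : (H.deleteIncidenceSet v).degree v = 0 := by
  simp [← card_neighborFinset_eq_degree, Finset.eq_empty_iff_forall_notMem, deleteIncidenceSet_adj]

lemma degree_deleteIncidenceSet_le (x : V) : (H.deleteIncidenceSet v).degree x ≤ H.degree x :=
  degree_le_of_le (H.deleteIncidenceSet_le v)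

lemma degree_deleteIncidenceSet_of_adj {x : V} (hx : H.Adj v x) :
    (H.deleteIncidenceSet v).degree x + 1 = H.degree x := by
  rw [← card_neighborFinset_eq_degree, neighborFinset_deleteIncidenceSet hx.ne',
    Finset.card_erase_add_one ((mem_neighborFinset _ _ _).2 hx.symm), card_neighborFinset_eq_degree]

lemma degree_deleteIncidenceSet_of_not_adj {x : V} (hxv : x ≠ v) (hx : ¬ H.Adj v x) :
    (H.deleteIncidenceSet v).degree x = H.degree x := by
  rw [← card_neighborFinset_eq_degree, neighborFinset_deleteIncidenceSet hxv,
    Finset.erase_eq_of_notMem (by simpa using fun h => hx h.symm), card_neighborFinset_eq_degree]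

lemma edgeFinset_deleteIncidenceSet_inter_sym2 :
    (H.deleteIncidenceSet v).edgeFinset ∩ S.sym2 = H.edgeFinset ∩ (S.erase v).sym2 := by
  ext ⟨a, b⟩
  simp [deleteIncidenceSet_adj]
  tauto

lemma card_edgeFinset_inter_sym2_insert (hN : H.neighborFinset v ⊆ S) :
    #(H.edgeFinset ∩ (insert v S).sym2) = #(H.edgeFinset ∩ (S.erase v).sym2) + H.degree v := by
  rw [← Finset.card_filter_add_card_filter_not (s := H.edgeFinset ∩ (insert v S).sym2) (v ∈ ·),
    add_comm, ← card_incidenceFinset_eq_degree]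
  congr 2 <;> ext ⟨a, b⟩
  · simp only [Finset.mem_filter, Finset.mem_inter, mem_edgeFinset, mem_edgeSet,
      Finset.mk_mem_sym2_iff, Finset.mem_insert, Finset.mem_erase, Sym2.mem_iff]
    tauto
  · simp only [Finset.mem_filter, Finset.mem_inter, mem_edgeFinset, mem_edgeSet,
      Finset.mk_mem_sym2_iff, Finset.mem_insert, mem_incidenceFinset, mk'_mem_incidenceSet_iff,
      Sym2.mem_iff]
    constructor
    · exact fun h => ⟨h.1.1, h.2⟩
    · rintro ⟨hab, rfl | rfl⟩
      · exact ⟨⟨hab, .inl rfl, .inr (hN ((mem_neighborFinset _ _ _).2 hab))⟩, .inl rfl⟩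
      · exact ⟨⟨hab, .inr (hN ((mem_neighborFinset _ _ _).2 hab.symm)), .inl rfl⟩, .inr rfl⟩

lemma HasEvenParts.even_deleteIncidenceSet (h : H.HasEvenParts)
    (hN : H.neighborFinset v = {u, w}) (hne : u ≠ w) (hS : (H.deleteIncidenceSet v).AdjClosed S)
    (huw : u ∈ S ↔ w ∈ S) :
    Even #((H.deleteIncidenceSet v).edgeFinset ∩ S.sym2) := by
  have hS' : ∀ ⦃a b⦄, H.Adj a b → a ≠ v → b ≠ v → a ∈ S → b ∈ S := fun a b hab ha hb =>
    hS (deleteIncidenceSet_adj.2 ⟨hab, ha, hb⟩)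
  rw [edgeFinset_deleteIncidenceSet_inter_sym2]
  -- `insert v S` or `S.erase v` is closed in `H`, with the two edges at `v` or none of them.
  by_cases hu : u ∈ S
  · have hw := huw.1 hu
    have hvS : H.neighborFinset v ⊆ S := by rw [hN]; simp [Finset.insert_subset_iff, hu, hw]
    have hinsert := h (insert v S) fun a b hab ha => by
      rw [Finset.mem_insert] at ha ⊢
      obtain rfl | ha := ha
      · exact .inr (hvS ((mem_neighborFinset _ _ _).2 hab))
      · by_cases hb : b = v
        · exact .inl hb
        · by_cases hav : a = v
          · exact .inr (hvS ((mem_neighborFinset _ _ _).2 (hav ▸ hab)))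
          · exact .inr (hS' hab hav hb ha)
    rw [card_edgeFinset_inter_sym2_insert hvS, ← card_neighborFinset_eq_degree, hN,
      Finset.card_pair hne] at hinsert
    simpa [Nat.even_add] using hinsert
  · have hvS : ∀ ⦃a⦄, H.Adj a v → a ∉ S := fun a hav ha => by
      have : a ∈ H.neighborFinset v := (mem_neighborFinset _ _ _).2 hav.symm
      rw [hN, Finset.mem_insert, Finset.mem_singleton] at this
      obtain rfl | rfl := this
      exacts [hu ha, hu (huw.2 ha)]
    refine h _ fun a b hab ha => ?_
    obtain ⟨hav, ha⟩ := Finset.mem_erase.1 ha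
    have hbv : b ≠ v := fun hb => hvS (hb ▸ hab) ha
    exact Finset.mem_erase.2 ⟨hbv, hS' hab hav hbv ha⟩

lemma mem_of_adjClosed_deleteIncidenceSet (hN : H.neighborFinset v = {u, w})
    (hΔ : ∀ x, H.degree x ≤ 2) (h1 : ∀ x, H.degree x ≠ 1)
    (hS : (H.deleteIncidenceSet v).AdjClosed S) (hu : u ∈ S) : w ∈ S := by
  -- Otherwise `u` would be the only vertex of odd degree in `S`.
  by_contra hw
  have hadj : ∀ {x}, H.Adj v x ↔ x = u ∨ x = w := by
    intro x; rw [← mem_neighborFinset, hN]; simp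
  have hdeg_u : (H.deleteIncidenceSet v).degree u = 1 := by
    have := degree_deleteIncidenceSet_of_adj (hadj.2 (.inl rfl))
    have := hΔ u; have := h1 u; omega
  have heven : ∀ x ∈ S.erase u, Even ((H.deleteIncidenceSet v).degree x) := by
    intro x hx
    obtain ⟨hxu, hxS⟩ := Finset.mem_erase.1 hx
    by_cases hxv : x = v
    · rw [hxv, degree_deleteIncidenceSet_self]; exact Even.zero
    have hxw : x ≠ w := by rintro rfl; exact hw hxS
    rw [degree_deleteIncidenceSet_of_not_adj hxv (by simp [hadj, hxu, hxw])]
    have := hΔ x; have := h1 x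
    obtain h | h : H.degree x = 0 ∨ H.degree x = 2 := by omega
    all_goals simp [h]
  have := hS.even_sum_degree
  rw [← Finset.add_sum_erase S _ hu, hdeg_u] at this
  exact Nat.not_even_one ((Nat.even_add.1 this).2 (even_sum _ heven))

lemma HasEvenParts.deleteIncidenceSet (h : H.HasEvenParts) (hN : H.neighborFinset v = {u, w})
    (hne : u ≠ w) (hΔ : ∀ x, H.degree x ≤ 2)
    (hside : H.degree u = 1 ∨ ∀ x, H.degree x ≠ 1) : (H.deleteIncidenceSet v).HasEvenParts := by
  intro S hS
  rcases hside with hu | h1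
  · have hvu : H.Adj v u := by rw [← mem_neighborFinset, hN]; simp
    have hu0 : ∀ y, ¬ (H.deleteIncidenceSet v).Adj u y := fun y huy => by
      have := degree_deleteIncidenceSet_of_adj hvu
      rw [hu, Nat.add_eq_right] at this
      rw [← card_neighborFinset_eq_degree, Finset.card_eq_zero] at this
      simpa [this] using (mem_neighborFinset _ _ _).2 huy
    -- `u` is isolated after the deletion, so it can be moved to the side of `w`.
    set S' := if w ∈ S then insert u S else S.erase u
    have hSS' : ∀ ⦃x y⦄, (H.deleteIncidenceSet v).Adj x y → (x ∈ S ↔ x ∈ S') := by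
      intro x y hxy
      have hxu : x ≠ u := by rintro rfl; exact hu0 y hxy
      simp only [S']
      split_ifs <;> simp [hxu]
    rw [edgeFinset_inter_sym2_eq_of_agree hSS']
    refine h.even_deleteIncidenceSet hN hne (hS.of_agree hSS') ?_
    simp only [S']
    split_ifs with hw <;> simp [hw, Ne.symm hne]
  · exact h.even_deleteIncidenceSet hN hne hS
      ⟨mem_of_adjClosed_deleteIncidenceSet hN hΔ h1 hS,
        mem_of_adjClosed_deleteIncidenceSet (Finset.pair_comm u w ▸ hN) hΔ h1 hS⟩

lemma IsCherryCover.insert_of_deleteIncidenceSet {J : Finset V}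
    (hN : H.neighborFinset v = {u, w}) (hne : u ≠ w) (hΔ : ∀ x, H.degree x ≤ 2)
    (hJ : (H.deleteIncidenceSet v).IsCherryCover J) : H.IsCherryCover (insert v J) := by
  have hadj : ∀ {x}, H.Adj v x ↔ x = u ∨ x = w := by
    intro x; rw [← mem_neighborFinset, hN]; simp
  have hvJ : v ∉ J := fun hv => by simpa [degree_deleteIncidenceSet_self] using hJ.1 v hv
  have hNJ : ∀ {x}, H.Adj v x → x ∉ J := fun {x} hx hxJ => by
    have := hJ.1 x hxJ; have := degree_deleteIncidenceSet_of_adj hx; have := hΔ x; omega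
  refine ⟨fun j hj => ?_, fun x y hxy => ?_⟩
  · obtain rfl | hj := Finset.mem_insert.1 hj
    · rw [← card_neighborFinset_eq_degree, hN, Finset.card_pair hne]
    · have := hJ.1 j hj; have := degree_deleteIncidenceSet_le (v := v) (H := H) j
      have := hΔ j; omega
  · by_cases hx : x = v
    · subst hx; simp [hNJ hxy, hxy.ne']
    by_cases hy : y = v
    · subst hy; simp [hNJ hxy.symm, hxy.ne]
    simpa [hx, hy] using hJ.2 (deleteIncidenceSet_adj.2 ⟨hxy, hx, hy⟩)

end DeleteIncidenceSet

lemma HasEvenParts.degree_eq_two_of_adj_of_degree_eq_one (h : H.HasEvenParts)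
    (hΔ : ∀ x, H.degree x ≤ 2) {u v : V} (hu : H.degree u = 1) (huv : H.Adj u v) :
    H.degree v = 2 := by
  have := hΔ v
  have := (H.degree_pos_iff_exists_adj v).2 ⟨u, huv.symm⟩
  suffices H.degree v ≠ 1 by omega
  intro hv
  obtain ⟨u', hNu⟩ := Finset.card_eq_one.1 ((card_neighborFinset_eq_degree H u).trans hu)
  obtain ⟨v', hNv⟩ := Finset.card_eq_one.1 ((card_neighborFinset_eq_degree H v).trans hv)
  have hu' : v = u' := by simpa [hNu] using (mem_neighborFinset _ _ _).2 huv
  have hv' : u = v' := by simpa [hNv] using (mem_neighborFinset _ _ _).2 huv.symm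
  have hclosed : H.AdjClosed {u, v} := by
    intro a b hab ha
    rw [Finset.mem_insert, Finset.mem_singleton] at ha ⊢
    obtain rfl | rfl := ha
    · exact .inr (by simpa [hNu, ← hu'] using (mem_neighborFinset _ _ _).2 hab)
    · exact .inl (by simpa [hNv, ← hv'] using (mem_neighborFinset _ _ _).2 hab)
  obtain ⟨k, hk⟩ := h _ hclosed
  have := hclosed.sum_degree_eq
  rw [Finset.sum_pair huv.ne, hu, hv] at this
  omega

lemma HasEvenParts.exists_neighborFinset_eq_pair (h : H.HasEvenParts) (hΔ : ∀ x, H.degree x ≤ 2)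
    (hE : H.edgeFinset.Nonempty) :
    ∃ v u w, u ≠ w ∧ H.neighborFinset v = {u, w} ∧ (H.degree u = 1 ∨ ∀ x, H.degree x ≠ 1) := by
  by_cases h1 : ∃ u, H.degree u = 1
  · obtain ⟨u, hu⟩ := h1
    obtain ⟨v, hNu⟩ := Finset.card_eq_one.1 ((card_neighborFinset_eq_degree H u).trans hu)
    have huv : H.Adj u v := by rw [← mem_neighborFinset, hNu]; simp
    have hv2 := h.degree_eq_two_of_adj_of_degree_eq_one hΔ hu huv
    obtain ⟨a, b, hab, hNv⟩ := Finset.card_eq_two.1 ((card_neighborFinset_eq_degree H v).trans hv2)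
    have hu : u ∈ H.neighborFinset v := (mem_neighborFinset _ _ _).2 huv.symm
    rw [hNv, Finset.mem_insert, Finset.mem_singleton] at hu
    obtain rfl | rfl := hu
    · exact ⟨v, u, b, hab, hNv, .inl ‹_›⟩
    · exact ⟨v, u, a, hab.symm, by rw [hNv, Finset.pair_comm], .inl ‹_›⟩
  · push Not at h1
    obtain ⟨⟨a, b⟩, hab⟩ := hE
    rw [mem_edgeFinset, mem_edgeSet] at hab
    have ha2 : H.degree a = 2 := by
      have := hΔ a; have := h1 a; have := (H.degree_pos_iff_exists_adj a).2 ⟨b, hab⟩; omega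
    obtain ⟨u, w, huw, hN⟩ := Finset.card_eq_two.1 ((card_neighborFinset_eq_degree H a).trans ha2)
    exact ⟨a, u, w, huw, hN, .inr h1⟩

theorem HasEvenParts.exists_isCherryCover (h : H.HasEvenParts) (hΔ : ∀ x, H.degree x ≤ 2) :
    ∃ J, H.IsCherryCover J := by
  induction hn : #H.edgeFinset using Nat.strong_induction_on generalizing H with
  | _ n ih =>
    obtain hE | hE := H.edgeFinset.eq_empty_or_nonempty
    · refine ⟨∅, by simp, fun x y hxy => ?_⟩
      simpa [hE] using (mem_edgeFinset (G := H) (e := s(x, y))).2 hxy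
    obtain ⟨v, u, w, hne, hN, hside⟩ := h.exists_neighborFinset_eq_pair hΔ hE
    have hlt : #(H.deleteIncidenceSet v).edgeFinset < n := by
      rw [card_edgeFinset_deleteIncidenceSet, ← hn, ← card_neighborFinset_eq_degree, hN,
        Finset.card_pair hne]
      have := Finset.card_pos.2 hE
      omega
    obtain ⟨J, hJ⟩ := ih _ hlt (h.deleteIncidenceSet hN hne hΔ hside)
      (fun x => (degree_deleteIncidenceSet_le x).trans (hΔ x)) rfl
    exact ⟨_, hJ.insert_of_deleteIncidenceSet hN hne hΔ⟩

end EvenParts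

section Leaves

variable {V : Type*} {G : SimpleGraph V}

lemma Walk.IsCycle.not_mem_support_of_subsingleton_neighborSet {u x : V} {c : G.Walk u u}
    (hc : c.IsCycle) (hx : (G.neighborSet x).Subsingleton) : x ∉ c.support := by
  classical
  intro hxc
  have hc' := hc.rotate hxc
  exact hc'.snd_ne_penultimate (hx ((c.rotate x hxc).adj_snd hc'.not_nil)
    ((c.rotate x hxc).adj_penultimate hc'.not_nil).symm)

lemma isTree_iff_isTree_induce {s : Set V} (hs : ∀ v ∉ s, ∃ w ∈ s, G.neighborSet v = {w}) :
    G.IsTree ↔ (G.induce s).IsTree := by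
  have hleaf : ∀ v ∉ s, (G.neighborSet v).Subsingleton := fun v hv => by
    obtain ⟨w, -, hw⟩ := hs v hv
    exact hw ▸ Set.subsingleton_singleton
  have hmem : ∀ v, ∃ w ∈ s, G.Reachable v w := fun v => by
    by_cases hv : v ∈ s
    · exact ⟨v, hv, .refl v⟩
    · obtain ⟨w, hws, hw⟩ := hs v hv
      exact ⟨w, hws, Adj.reachable (by simp [← mem_neighborSet, hw])⟩
  constructor
  · intro hT
    refine ⟨(connected_iff _).2 ⟨hT.connected.preconnected.induce_of_degree_eq_one hleaf, ?_⟩,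
      hT.isAcyclic.induce s⟩
    obtain ⟨w, hw, -⟩ := hmem hT.connected.nonempty.some
    exact ⟨⟨w, hw⟩⟩
  · intro hT
    refine ⟨(connected_iff _).2 ⟨fun x y => ?_, ⟨hT.connected.nonempty.some.1⟩⟩, ?_⟩
    · obtain ⟨a, ha, hxa⟩ := hmem x
      obtain ⟨b, hb, hyb⟩ := hmem y
      exact hxa.trans <| ((hT.connected.preconnected ⟨a, ha⟩ ⟨b, hb⟩).map
        (Embedding.induce s).toHom).trans hyb.symm
    · intro u c hc
      have hcs : ∀ x ∈ c.support, x ∈ s := fun x hx => by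
        by_contra hxs
        exact hc.not_mem_support_of_subsingleton_neighborSet (hleaf x hxs) hx
      exact hT.isAcyclic _ (Walk.IsCycle.of_map (f := (Embedding.induce s).toHom)
        (by rwa [Walk.map_induce]) : (c.induce s hcs).IsCycle)

lemma Preconnected.not_adj_of_subsingleton_neighborSet [Fintype V] (hG : G.Preconnected)
    (hV : 2 < Fintype.card V) {x y : V} (hx : (G.neighborSet x).Subsingleton)
    (hy : (G.neighborSet y).Subsingleton) : ¬ G.Adj x y := by
  classical
  intro hxy
  obtain ⟨z, -, hz⟩ := Finset.exists_mem_notMem_of_card_lt_card (s := {x, y}) (t := Finset.univ)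
    (Finset.card_le_two.trans_lt (by simpa using hV))
  simp only [Finset.mem_insert, Finset.mem_singleton, not_or] at hz
  obtain ⟨p, hp⟩ := (hG x z).exists_isPath
  have hnil : ¬ p.Nil := Walk.not_nil_of_ne (Ne.symm hz.1)
  have hsnd : p.snd = y := hx (p.adj_snd hnil) hxy
  exact hp.isTrail.not_mem_support_of_subsingleton_neighborSet hxy.ne' (Ne.symm hz.2) hy
    (hsnd ▸ List.mem_of_mem_tail (p.snd_mem_tail_support hnil))

lemma exists_neighborSet_eq_singleton_of_degree_eq_one {v : V} [Fintype (G.neighborSet v)]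
    (h : G.degree v = 1) : ∃ w, G.neighborSet v = {w} := by
  obtain ⟨w, hw, huniq⟩ := degree_eq_one_iff_existsUnique_adj.1 h
  exact ⟨w, Set.eq_singleton_iff_unique_mem.2 ⟨hw, huniq⟩⟩

def attachLeaves (G : SimpleGraph V) (A : Set V) (f : V → V) : SimpleGraph V :=
  G ⊓ fromRel fun x y => x ∈ A ∧ y ∈ A ∨ x ∉ A ∧ y = f x

section AttachLeaves

variable {A : Set V} {f : V → V}

lemma attachLeaves_adj {x y : V} : (attachLeaves G A f).Adj x y ↔
    G.Adj x y ∧ (x ∈ A ∧ y ∈ A ∨ x ∉ A ∧ y = f x ∨ y ∉ A ∧ x = f y) := by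
  simp only [attachLeaves, inf_adj, fromRel_adj]
  constructor
  · rintro ⟨h, -, h'⟩; exact ⟨h, by tauto⟩
  · rintro ⟨h, h'⟩; exact ⟨h, h.ne, by tauto⟩

lemma attachLeaves_le : attachLeaves G A f ≤ G := inf_le_left

lemma neighborSet_attachLeaves (hf : ∀ x ∉ A, G.Adj x (f x) ∧ f x ∈ A) {x : V} (hx : x ∉ A) :
    (attachLeaves G A f).neighborSet x = {f x} := by
  ext y
  simp only [mem_neighborSet, attachLeaves_adj, Set.mem_singleton_iff]
  constructor
  · rintro ⟨-, ⟨hxA, -⟩ | ⟨-, rfl⟩ | ⟨hy, rfl⟩⟩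
    · exact absurd hxA hx
    · rfl
    · exact absurd (hf y hy).2 hx
  · rintro rfl
    exact ⟨(hf x hx).1, .inr (.inl ⟨hx, rfl⟩)⟩

lemma IsTree.attachLeaves (hf : ∀ x ∉ A, G.Adj x (f x) ∧ f x ∈ A) (hA : (G.induce A).IsTree) :
    (attachLeaves G A f).IsTree := by
  rw [isTree_iff_isTree_induce fun x hx => ⟨f x, (hf x hx).2, neighborSet_attachLeaves hf hx⟩]
  convert hA using 1
  ext ⟨x, hx⟩ ⟨y, hy⟩
  simp [attachLeaves_adj, hx, hy]

end AttachLeaves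

end Leaves

section Cubic

variable {V : Type*} {G T : SimpleGraph V} {J : Finset V}
variable [Fintype V] [DecidableEq V] [DecidableRel G.Adj]

lemma degree_sdiff_add_degree [DecidableRel T.Adj] [DecidableRel (G \ T).Adj] (hTG : T ≤ G)
    (v : V) : (G \ T).degree v + T.degree v = G.degree v := by
  simp only [← card_neighborFinset_eq_degree, neighborFinset_sdiff]
  exact Finset.card_sdiff_add_card_eq_card fun y => by simpa using @hTG v y

lemma isCherryCover_sdiff_attachLeaves {f : V → V}
    (hf : ∀ x ∉ (↑Jᶜ : Set V), G.Adj x (f x) ∧ f x ∈ (↑Jᶜ : Set V))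
    (hJ : ∀ u ∈ J, ∀ v ∈ J, ¬ G.Adj u v) (h3 : ∀ j ∈ J, G.degree j = 3)
    [DecidableRel (G \ attachLeaves G ↑Jᶜ f).Adj] :
    (G \ attachLeaves G ↑Jᶜ f).IsCherryCover J := by
  refine ⟨fun j hj => ?_, fun x y hxy => ?_⟩
  · have hN : (G \ attachLeaves G ↑Jᶜ f).neighborFinset j = (G.neighborFinset j).erase (f j) := by
      ext y
      have := neighborSet_attachLeaves hf (x := j) (by simpa using hj)
      rw [Set.ext_iff] at this
      simp only [mem_neighborSet, Set.mem_singleton_iff] at this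
      simp only [mem_neighborFinset, Finset.mem_erase, sdiff_adj, this]
      tauto
    rw [← card_neighborFinset_eq_degree, hN,
      Finset.card_erase_of_mem (by simpa using (hf j (by simpa using hj)).1),
      card_neighborFinset_eq_degree, h3 j hj]
  · rw [sdiff_adj, attachLeaves_adj] at hxy
    by_cases hx : x ∈ J <;> by_cases hy : y ∈ J
    · exact absurd hxy.1 (hJ x hx y hy)
    all_goals simp_all

theorem IsTree.exists_isTree_induce_compl_of_hasEvenParts (hcubic : ∀ v, G.degree v = 3)
    (hTG : T ≤ G) (hT : T.IsTree) [DecidableRel T.Adj] [DecidableRel (G \ T).Adj]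
    (heven : (G \ T).HasEvenParts) :
    ∃ J : Finset V, (G.induce ↑Jᶜ).IsTree ∧ ∀ u ∈ J, ∀ v ∈ J, ¬ G.Adj u v := by
  obtain ⟨v₀⟩ := hT.connected.nonempty
  have hcard : 3 < Fintype.card V := hcubic v₀ ▸ G.degree_lt_card_verts v₀
  have : Nontrivial V := Fintype.one_lt_card_iff_nontrivial.1 (by omega)
  have hsplit := degree_sdiff_add_degree hTG
  have hTpos := hT.connected.preconnected.degree_pos_of_nontrivial (G := T)
  obtain ⟨J, hJ⟩ := heven.exists_isCherryCover fun v => by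
    have := hsplit v; have := hTpos v; have := hcubic v; omega
  have hleaf : ∀ j ∈ J, ∃ w, T.neighborSet j = {w} := fun j hj =>
    exists_neighborSet_eq_singleton_of_degree_eq_one (by
      have := hsplit j; have := hJ.1 j hj; have := hcubic j; omega)
  have hTJ : ∀ x ∈ J, ∀ y ∈ J, ¬ T.Adj x y := fun x hx y hy => by
    obtain ⟨⟨x', hx'⟩, ⟨y', hy'⟩⟩ := And.intro (hleaf x hx) (hleaf y hy)
    exact hT.connected.preconnected.not_adj_of_subsingleton_neighborSet (by omega)
      (hx' ▸ Set.subsingleton_singleton) (hy' ▸ Set.subsingleton_singleton)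
  have hGT : ∀ ⦃x y⦄, x ∉ J → y ∉ J → G.Adj x y → T.Adj x y := fun x y hx hy hxy => by
    by_contra h
    simpa [hx, hy] using hJ.2 ((sdiff_adj _ _ _ _).2 ⟨hxy, h⟩)
  refine ⟨J, ?_, fun x hx y hy hxy => ?_⟩
  · have hGT' : G.induce ↑Jᶜ = T.induce ↑Jᶜ := by
      ext ⟨x, hx⟩ ⟨y, hy⟩
      simp only [Finset.coe_compl, Set.mem_compl_iff, Finset.mem_coe] at hx hy
      exact ⟨hGT hx hy, fun h => hTG h⟩
    refine hGT' ▸ (isTree_iff_isTree_induce fun v hv => ?_).1 hT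
    simp only [Finset.coe_compl, Set.mem_compl_iff, not_not, Finset.mem_coe] at hv ⊢
    obtain ⟨w, hw⟩ := hleaf v hv
    exact ⟨w, fun hwJ => hTJ v hv w hwJ (by simp [← mem_neighborSet, hw]), hw⟩
  · by_cases h : T.Adj x y
    · exact hTJ x hx y hy h
    · simpa [hx, hy] using hJ.2 ((sdiff_adj _ _ _ _).2 ⟨hxy, h⟩)

end Cubic

end SimpleGraph

theorem stmt6_general {V : Type*} [Fintype V] [DecidableEq V] (G : SimpleGraph V)
    [DecidableRel G.Adj] (hcubic : ∀ v, G.degree v = 3) :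
    (∃ T : SimpleGraph V, T ≤ G ∧ T.IsTree ∧
        ∀ c : (G \ T).ConnectedComponent, Even ((cotreeCompEdges (G \ T) c).ncard)) ↔
    (∃ A J : Finset V, Disjoint A J ∧ A ∪ J = Finset.univ ∧
        (G.induce (↑A : Set V)).IsTree ∧ ∀ u ∈ J, ∀ v ∈ J, ¬ G.Adj u v) := by
  classical
  constructor
  · rintro ⟨T, hTG, hT, heven⟩
    obtain ⟨J, hJtree, hJ⟩ := hT.exists_isTree_induce_compl_of_hasEvenParts hcubic hTG
      (hasEvenParts_iff_even_cotreeCompEdges.2 heven)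
    exact ⟨Jᶜ, J, disjoint_compl_left, compl_sup_eq_top, hJtree, hJ⟩
  · rintro ⟨A, J, hdisj, hunion, hA, hJ⟩
    obtain rfl : A = Jᶜ := IsCompl.eq_compl ⟨hdisj, codisjoint_iff.2 hunion⟩
    choose f hf using fun x => (G.degree_pos_iff_exists_adj x).1 (by rw [hcubic x]; norm_num)
    have hfJ : ∀ x ∉ (↑Jᶜ : Set V), G.Adj x (f x) ∧ f x ∈ (↑Jᶜ : Set V) := fun x hx => by
      simp only [Finset.coe_compl, Set.mem_compl_iff, not_not, Finset.mem_coe] at hx ⊢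
      exact ⟨hf x, fun hfx => hJ x hx _ hfx (hf x)⟩
    exact ⟨_, attachLeaves_le, hA.attachLeaves hfJ, hasEvenParts_iff_even_cotreeCompEdges.1
      (isCherryCover_sdiff_attachLeaves hfJ hJ fun j _ => hcubic j).hasEvenParts⟩

/-- A connected cubic graph has a spanning tree all of whose cotree components are even
iff its vertex set can be partitioned into `A` inducing a tree and an independent set `J`. -/
theorem stmt6 {V : Type*} [Fintype V] [DecidableEq V] (G : SimpleGraph V)
    [DecidableRel G.Adj] (hconn : G.Connected) (hcubic : ∀ v, G.degree v = 3) :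
    (∃ T : SimpleGraph V, T ≤ G ∧ T.IsTree ∧
        ∀ c : (G \ T).ConnectedComponent, Even ((cotreeCompEdges (G \ T) c).ncard)) ↔
    (∃ A J : Finset V, Disjoint A J ∧ A ∪ J = Finset.univ ∧
        (G.induce (↑A : Set V)).IsTree ∧ ∀ u ∈ J, ∀ v ∈ J, ¬ G.Adj u v) :=
  stmt6_general G hcubic
end

section
/- If G is a connected cubic graph on n vertices admitting a vertex partition {A, J} in which A induces a forest with at most two components, J is independent or near-independent, and (if A induces two components then J is independent), then the decycling number of G equals ⌈(n+2)/4⌉. -/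
open SimpleGraph Finset

/-!
Double counting the edges at a vertex set `S` of a cubic graph gives
`3|S| + 2e(Sᶜ) = 3|Sᶜ| + 2e(S)`, where `e(X)` is the number of edges inside `X`.
If `G - S` is a forest then `e(Sᶜ) ≤ |Sᶜ| - 1`, which forces `n + 2 ≤ 4|S|`.
Conversely `J` is a decycling set, and since `G[A]` is a forest with `c ∈ {1, 2}` components,
the same identity gives `4|J| = n + 2c + 2e(J)`, which is `n + 2` or `n + 4` in the allowed
cases; either way `|J| = ⌈(n + 2)/4⌉`.
-/

namespace SimpleGraph

variable {V : Type*} {G : SimpleGraph V}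

theorem IsAcyclic.card_edgeFinset_add_one_le [Fintype V] [Nonempty V] [Fintype G.edgeSet]
    (hG : G.IsAcyclic) : #G.edgeFinset + 1 ≤ Fintype.card V := by
  classical
  obtain ⟨F, hGF, -, hF⟩ := connected_top.exists_isTree_le_of_le_of_isAcyclic le_top hG
  calc #G.edgeFinset + 1 ≤ #F.edgeFinset + 1 := by gcongr
    _ = Fintype.card V := hF.card_edgeFinset

theorem Walk.support_subset_left_of_support_subset_union {s t : Set V}
    (hst : ∀ a ∈ s, ∀ b ∈ t, ¬ G.Adj a b) {u v : V} (p : G.Walk u v) (hu : u ∈ s)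
    (hp : ∀ w ∈ p.support, w ∈ s ∪ t) : ∀ w ∈ p.support, w ∈ s := by
  induction p with
  | nil => simpa using hu
  | @cons a b c hab p ih =>
    have hb : b ∈ s := by
      rcases hp b (by simp) with hb | hb
      · exact hb
      · exact absurd hab (hst a hu b hb)
    simp only [support_cons, List.mem_cons, forall_eq_or_imp] at hp ⊢
    exact ⟨hu, ih hb hp.2⟩

theorem Walk.IsCycle.not_forall_mem_support_of_isAcyclic_induce {s : Set V}
    (hs : (G.induce s).IsAcyclic) {x : V} {c : G.Walk x x} (hc : c.IsCycle) :
    ¬ ∀ w ∈ c.support, w ∈ s := by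
  intro hcs
  refine hs (c.induce s hcs) ?_
  rwa [← Walk.isCycle_map_iff_of_injective (f := (Embedding.induce (G := G) s).toHom)
    Subtype.val_injective, Walk.map_induce]

theorem isAcyclic_induce_union {s t : Set V} (hst : ∀ a ∈ s, ∀ b ∈ t, ¬ G.Adj a b)
    (hs : (G.induce s).IsAcyclic) (ht : (G.induce t).IsAcyclic) :
    (G.induce (s ∪ t)).IsAcyclic := by
  intro x c hc
  set c' := c.map (Embedding.induce (s ∪ t)).toHom
  have hc' : c'.IsCycle := hc.map Subtype.val_injective
  have hsupp : ∀ w ∈ c'.support, w ∈ s ∪ t := by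
    simp only [c', Walk.support_map, List.mem_map]
    rintro _ ⟨y, -, rfl⟩
    exact y.2
  rcases x.2 with hx | hx
  · exact hc'.not_forall_mem_support_of_isAcyclic_induce hs
      (c'.support_subset_left_of_support_subset_union hst hx hsupp)
  · refine hc'.not_forall_mem_support_of_isAcyclic_induce ht
      (c'.support_subset_left_of_support_subset_union (t := s) ?_ hx ?_)
    · exact fun a ha b hb hab => hst b hb a ha hab.symm
    · exact fun w hw => (hsupp w hw).symm

section Counting

variable [DecidableRel G.Adj]

theorem sum_card_filter_adj_eq_two_mul_card_edgeFinset_induce (T : Finset V) :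
    ∑ v ∈ T, #{u ∈ T | G.Adj v u} = 2 * #(G.induce (T : Set V)).edgeFinset := by
  rw [← sum_degrees_eq_twice_card_edges, ← Finset.sum_coe_sort T]
  refine Fintype.sum_congr _ _ fun v => ?_
  rw [← card_neighborFinset_eq_degree, ← card_map (Function.Embedding.subtype _)]
  congr 1
  ext u
  simp [and_comm]

theorem card_edgeFinset_induce_eq_zero {T : Finset V} (hT : ∀ u ∈ T, ∀ v ∈ T, ¬ G.Adj u v) :
    #(G.induce (T : Set V)).edgeFinset = 0 := by
  have := sum_card_filter_adj_eq_two_mul_card_edgeFinset_induce (G := G) T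
  have h0 : ∑ v ∈ T, #{u ∈ T | G.Adj v u} = 0 :=
    sum_eq_zero fun v hv => card_eq_zero.mpr (filter_eq_empty_iff.mpr fun u hu => hT v hv u hu)
  omega

theorem card_edgeFinset_induce_eq_ncard (T : Finset V) :
    #(G.induce (T : Set V)).edgeFinset =
      {e | e ∈ G.edgeSet ∧ ∀ v ∈ e, v ∈ (T : Set V)}.ncard := by
  have : {e | e ∈ G.edgeSet ∧ ∀ v ∈ e, v ∈ (T : Set V)} =
      (Function.Embedding.subtype _).sym2Map '' (G.induce (T : Set V)).edgeSet := by
    ext e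
    constructor
    · induction e with
      | _ a b =>
        rintro ⟨hab, hT⟩
        exact ⟨s(⟨a, hT a (Sym2.mem_mk_left a b)⟩, ⟨b, hT b (Sym2.mem_mk_right a b)⟩), hab, rfl⟩
    · rintro ⟨e, he, rfl⟩
      induction e with
      | _ x y => exact ⟨he, by simp⟩
  rw [this, Set.ncard_image_of_injective _ (Function.Embedding.injective _), ← coe_edgeFinset,
    Set.ncard_coe_finset]

theorem IsTree.card_edgeFinset_induce {T : Finset V} (hT : (G.induce (T : Set V)).IsTree) :
    #(G.induce (T : Set V)).edgeFinset + 1 = #T := by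
  simpa using hT.card_edgeFinset

theorem card_edgeFinset_induce_union [DecidableEq V] {s t : Finset V} (hd : Disjoint s t)
    (hst : ∀ a ∈ s, ∀ b ∈ t, ¬ G.Adj a b) :
    #(G.induce (↑(s ∪ t) : Set V)).edgeFinset =
      #(G.induce (s : Set V)).edgeFinset + #(G.induce (t : Set V)).edgeFinset := by
  have hs : ∀ v ∈ s, #{u ∈ s ∪ t | G.Adj v u} = #{u ∈ s | G.Adj v u} := fun v hv => by
    rw [filter_union, filter_false_of_mem fun u hu => hst v hv u hu, union_empty]
  have ht : ∀ v ∈ t, #{u ∈ s ∪ t | G.Adj v u} = #{u ∈ t | G.Adj v u} := fun v hv => by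
    rw [filter_union, filter_false_of_mem fun u hu huv => hst u hu v hv huv.symm, empty_union]
  have := sum_card_filter_adj_eq_two_mul_card_edgeFinset_induce (G := G) (s ∪ t)
  rw [sum_union hd, sum_congr rfl hs, sum_congr rfl ht,
    sum_card_filter_adj_eq_two_mul_card_edgeFinset_induce,
    sum_card_filter_adj_eq_two_mul_card_edgeFinset_induce] at this
  omega

theorem card_edgeFinset_induce_union_add_two [DecidableEq V] {s t : Finset V}
    (hd : Disjoint s t) (hst : ∀ a ∈ s, ∀ b ∈ t, ¬ G.Adj a b)
    (hs : (G.induce (s : Set V)).IsTree) (ht : (G.induce (t : Set V)).IsTree) :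
    #(G.induce (↑(s ∪ t) : Set V)).edgeFinset + 2 = #(s ∪ t) := by
  rw [card_edgeFinset_induce_union hd hst, card_union_of_disjoint hd, ← hs.card_edgeFinset_induce,
    ← ht.card_edgeFinset_induce]
  ring

theorem degree_eq_card_filter_adj_add_card_filter_adj_compl [Fintype V] [DecidableEq V]
    (T : Finset V) (v : V) :
    G.degree v = #{u ∈ T | G.Adj v u} + #{u ∈ Tᶜ | G.Adj v u} := by
  rw [← card_neighborFinset_eq_degree, neighborFinset_eq_filter, ← card_union_of_disjoint
    (disjoint_filter_filter disjoint_compl_right), ← filter_union, union_compl]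

theorem sum_card_filter_adj_comm (S T : Finset V) :
    ∑ v ∈ S, #{u ∈ T | G.Adj v u} = ∑ v ∈ T, #{u ∈ S | G.Adj v u} := by
  simpa only [bipartiteAbove, bipartiteBelow, adj_comm] using
    sum_card_bipartiteAbove_eq_sum_card_bipartiteBelow (s := S) (t := T) G.Adj

theorem IsRegularOfDegree.mul_card_add_two_mul_card_edgeFinset_induce_compl [Fintype V]
    [DecidableEq V] {d : ℕ} (hG : G.IsRegularOfDegree d) (S : Finset V) :
    d * #S + 2 * #(G.induce (↑Sᶜ : Set V)).edgeFinset =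
      d * #Sᶜ + 2 * #(G.induce (S : Set V)).edgeFinset := by
  have hsplit (T : Finset V) :
      d * #T = 2 * #(G.induce (T : Set V)).edgeFinset + ∑ v ∈ T, #{u ∈ Tᶜ | G.Adj v u} := by
    rw [← sum_card_filter_adj_eq_two_mul_card_edgeFinset_induce, ← sum_add_distrib, mul_comm,
      ← smul_eq_mul, ← sum_const]
    exact sum_congr rfl fun v _ =>
      (hG v).symm.trans (degree_eq_card_filter_adj_add_card_filter_adj_compl T v)
  have hS := hsplit S
  have hSc := hsplit Sᶜ
  rw [compl_compl, sum_card_filter_adj_comm] at hSc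
  omega

theorem IsRegularOfDegree.card_add_two_le_four_mul_card_of_isAcyclic [Fintype V]
    [DecidableEq V] [Nonempty V] (hG : G.IsRegularOfDegree 3) {S : Finset V}
    (hS : (G.induce (S : Set V)ᶜ).IsAcyclic) : Fintype.card V + 2 ≤ 4 * #S := by
  have hcard : #Sᶜ + #S = Fintype.card V := card_compl_add_card S
  obtain hSc | hSc := Sᶜ.eq_empty_or_nonempty
  · have : 0 < Fintype.card V := Fintype.card_pos
    rw [hSc, card_empty] at hcard
    omega
  · rw [← coe_compl] at hS
    obtain ⟨x, hx⟩ := hSc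
    have : Nonempty (↑Sᶜ : Set V) := ⟨⟨x, hx⟩⟩
    have hforest := hS.card_edgeFinset_add_one_le
    simp only [coe_sort_coe, Fintype.card_coe] at hforest
    have := hG.mul_card_add_two_mul_card_edgeFinset_induce_compl S
    omega

theorem IsRegularOfDegree.four_mul_card_compl_eq [Fintype V] [DecidableEq V]
    (hG : G.IsRegularOfDegree 3) {A : Finset V} {c : ℕ}
    (hA : #(G.induce (A : Set V)).edgeFinset + c = #A) :
    4 * #Aᶜ = Fintype.card V + 2 * c + 2 * #(G.induce (↑Aᶜ : Set V)).edgeFinset := by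
  have := hG.mul_card_add_two_mul_card_edgeFinset_induce_compl A
  have := card_compl_add_card A
  omega

end Counting

end SimpleGraph

/-- If a connected cubic graph on `n` vertices has a stable decycling partition `{A, J}`
(`A` induces a forest with at most two components, `J` is independent or near-independent,
and in the two-component case `J` is independent), then the decycling number of `G`
equals `⌈(n+2)/4⌉` (written in natural number arithmetic as `(n+2+3)/4`). -/
theorem stmt10 {V : Type*} [Fintype V] [DecidableEq V] (G : SimpleGraph V)
    [DecidableRel G.Adj] (hconn : G.Connected) (hcubic : ∀ v, G.degree v = 3)
    (A J : Finset V) (hdisj : Disjoint A J) (hcover : A ∪ J = Finset.univ)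
    (hstable :
      ((G.induce (↑A : Set V)).IsTree ∧
        ((∀ u ∈ J, ∀ v ∈ J, ¬ G.Adj u v) ∨
          {e | e ∈ G.edgeSet ∧ ∀ v ∈ e, v ∈ (↑J : Set V)}.ncard = 1)) ∨
      ((∃ A₁ A₂ : Finset V, Disjoint A₁ A₂ ∧ A₁ ∪ A₂ = A ∧
          A₁.Nonempty ∧ A₂.Nonempty ∧
          (G.induce (↑A₁ : Set V)).IsTree ∧ (G.induce (↑A₂ : Set V)).IsTree ∧
          ∀ u ∈ A₁, ∀ v ∈ A₂, ¬ G.Adj u v) ∧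
        (∀ u ∈ J, ∀ v ∈ J, ¬ G.Adj u v))) :
    IsLeast {k : ℕ | ∃ S : Finset V, (G.induce ((↑S : Set V)ᶜ)).IsAcyclic ∧ S.card = k}
      ((Fintype.card V + 2 + 3) / 4) := by
  have hG : G.IsRegularOfDegree 3 := hcubic
  have hJ : Aᶜ = J := IsCompl.compl_eq ⟨hdisj, codisjoint_iff.mpr hcover⟩
  obtain ⟨hA, hJcard⟩ : (G.induce (A : Set V)).IsAcyclic ∧
      (4 * #J = Fintype.card V + 2 ∨ 4 * #J = Fintype.card V + 4) := by
    rcases hstable with ⟨hA, hJind | hJnear⟩ | ⟨⟨A₁, A₂, h12, rfl, -, -, h₁, h₂, h12adj⟩, hJind⟩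
    · have := hG.four_mul_card_compl_eq hA.card_edgeFinset_induce
      rw [hJ, card_edgeFinset_induce_eq_zero hJind] at this
      exact ⟨hA.isAcyclic, by omega⟩
    · have := hG.four_mul_card_compl_eq hA.card_edgeFinset_induce
      rw [hJ, card_edgeFinset_induce_eq_ncard, hJnear] at this
      exact ⟨hA.isAcyclic, by omega⟩
    · have := hG.four_mul_card_compl_eq (card_edgeFinset_induce_union_add_two h12 h12adj h₁ h₂)
      rw [hJ, card_edgeFinset_induce_eq_zero hJind] at this
      refine ⟨?_, by omega⟩
      rw [coe_union]
      exact isAcyclic_induce_union h12adj h₁.isAcyclic h₂.isAcyclic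
  have : Nonempty V := hconn.nonempty
  refine ⟨⟨J, ?_, by omega⟩, ?_⟩
  · rwa [← hJ, coe_compl, compl_compl]
  · rintro _ ⟨S, hS, rfl⟩
    have := hG.card_add_two_le_four_mul_card_of_isAcyclic hS
    omega
end

section
/- Let G be a connected cubic graph obtained from a 2-edge-connected cubic graph H on n vertices by inflating every vertex of H to a triangle and replacing each edge of H with a string of diamonds of positive length. If G satisfies Nebeský's inequality ec(G−X)+2·oc(G−X)−2 ≤ |X| for the set X of edges of G not on any triangle, then n ≤ 4. -/
/-!
Triangles and diamonds both have the property that any two of their vertices have a common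
neighbour inside them, and each of their vertices has two neighbours inside them. As `G` is
cubic, a vertex therefore has at most one neighbour outside its piece, so an edge of `G` lies
on a triangle exactly when it joins two vertices of the same piece. Hence the components of
`G − X` are the pieces: the `n` triangles, with Betti number `1`, and the `K = ∑ k e` diamonds,
with Betti number `2`; and `X` consists of connecting edges, so `|X| ≤ K + 3n/2`. Nebeský's
inequality then reads `K + 2n - 2 ≤ K + 3n/2`, i.e. `n ≤ 4`.
-/

open SimpleGraph Finset

/-- Data witnessing that the cubic graph `G` is obtained from the cubic graph `H` by
inflating every vertex of `H` to a triangle and replacing each edge `e` of `H` by a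
string of `k e` diamonds: `tri u` is the vertex-triangle at `u`, `dia e i`
(for `i < k e`) are the diamonds of the string at `e`, and `cross e` are the
`k e + 1` connecting edges of the string at `e`. -/
structure DiamondInflation {VH VG : Type*} [Fintype VH] [Fintype VG]
    [DecidableEq VH] [DecidableEq VG]
    (H : SimpleGraph VH) (G : SimpleGraph VG) (k : Sym2 VH → ℕ) where
  tri : VH → Finset VG
  dia : Sym2 VH → ℕ → Finset VG
  cross : Sym2 VH → Finset (Sym2 VG)
  tri_card : ∀ u, (tri u).card = 3
  tri_adj : ∀ u, ∀ x ∈ tri u, ∀ y ∈ tri u, x ≠ y → G.Adj x y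
  dia_card : ∀ e ∈ H.edgeSet, ∀ i < k e, (dia e i).card = 4
  dia_edges : ∀ e ∈ H.edgeSet, ∀ i < k e,
    {f | f ∈ G.edgeSet ∧ ∀ v ∈ f, v ∈ (↑(dia e i) : Set VG)}.ncard = 5
  pieces_cover : ∀ x : VG,
    (∃ u, x ∈ tri u) ∨ (∃ e ∈ H.edgeSet, ∃ i < k e, x ∈ dia e i)
  tri_disj : ∀ u u', u ≠ u' → Disjoint (tri u) (tri u')
  dia_disj : ∀ e ∈ H.edgeSet, ∀ e' ∈ H.edgeSet, ∀ i < k e, ∀ j < k e',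
    (e ≠ e' ∨ i ≠ j) → Disjoint (dia e i) (dia e' j)
  tri_dia_disj : ∀ u, ∀ e ∈ H.edgeSet, ∀ i < k e, Disjoint (tri u) (dia e i)
  cross_card : ∀ e ∈ H.edgeSet, (cross e).card = k e + 1
  cross_sub : ∀ e ∈ H.edgeSet, (↑(cross e) : Set (Sym2 VG)) ⊆ G.edgeSet
  cross_ends : ∀ e ∈ H.edgeSet, ∀ f ∈ cross e, ∀ v ∈ f,
    (∃ u ∈ e, v ∈ tri u) ∨ (∃ i < k e, v ∈ dia e i)
  edge_classify : ∀ f ∈ G.edgeSet,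
    (∃ u, ∀ v ∈ f, v ∈ tri u) ∨
    (∃ e ∈ H.edgeSet, ∃ i < k e, ∀ v ∈ f, v ∈ dia e i) ∨
    (∃! e, e ∈ H.edgeSet ∧ f ∈ cross e)

/-- The Betti number (`|E| − |V| + 1`) of the connected component `c` of `Gr`. -/
noncomputable def compBetti {V : Type*} (Gr : SimpleGraph V)
    (c : Gr.ConnectedComponent) : ℤ :=
  ({e | e ∈ Gr.edgeSet ∧ ∀ v ∈ e, Gr.connectedComponentMk v = c}.ncard : ℤ)
    - c.supp.ncard + 1

namespace SimpleGraph
variable {V : Type*} (G : SimpleGraph V)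

def edgesIn (S : Set V) : Set (Sym2 V) := {f | f ∈ G.edgeSet ∧ ∀ v ∈ f, v ∈ S}

def HasCommonNeighborsIn (S : Finset V) : Prop :=
  ∀ x ∈ S, ∀ y ∈ S, x ≠ y → ∃ z ∈ S, G.Adj x z ∧ G.Adj y z

def nonTriangleEdges : Set (Sym2 V) :=
  {f | f ∈ G.edgeSet ∧ ¬ ∃ x y z : V, G.Adj x y ∧ G.Adj y z ∧ G.Adj x z ∧
    f ∈ ({s(x, y), s(y, z), s(x, z)} : Set (Sym2 V))}

variable {G}

lemma edgesIn_subset_image_offDiag [DecidableEq V] (S : Finset V) :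
    G.edgesIn S ⊆ ↑(S.offDiag.image Sym2.mk.uncurry) := by
  rintro ⟨a, b⟩ ⟨hE, hS⟩
  exact Finset.mem_image.2 ⟨(a, b), Finset.mem_offDiag.2
    ⟨hS a (Sym2.mem_mk_left a b), hS b (Sym2.mem_mk_right a b), (G.mem_edgeSet.1 hE).ne⟩, rfl⟩

lemma IsClique.ncard_edgesIn {S : Finset V} (h : G.IsClique (S : Set V)) :
    (G.edgesIn S).ncard = S.card.choose 2 := by
  classical
  rw [← Sym2.card_image_offDiag, ← Set.ncard_coe_finset]
  congr 1
  refine (edgesIn_subset_image_offDiag S).antisymm ?_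
  simp only [Finset.coe_image, Set.image_subset_iff]
  rintro ⟨a, b⟩ hab
  obtain ⟨ha, hb, hne⟩ := Finset.mem_offDiag.1 hab
  refine ⟨h ha hb hne, ?_⟩
  simp only [Function.uncurry_apply_pair, Sym2.mem_iff]
  rintro v (rfl | rfl) <;> assumption

lemma IsClique.hasCommonNeighborsIn {S : Finset V} (h : G.IsClique (S : Set V))
    (hS : 3 ≤ S.card) : G.HasCommonNeighborsIn S := by
  classical
  intro x hx y hy hxy
  obtain ⟨z, hz⟩ := Finset.card_pos.1 (show 0 < ((S.erase x).erase y).card by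
    rw [Finset.card_erase_of_mem (Finset.mem_erase.2 ⟨hxy.symm, hy⟩),
      Finset.card_erase_of_mem hx]
    omega)
  simp only [Finset.mem_erase] at hz
  exact ⟨z, hz.2.2, h hx hz.2.2 hz.2.1.symm, h hy hz.2.2 hz.1.symm⟩

lemma eq_of_not_adj_of_choose_two_le {S : Finset V}
    (hS : S.card.choose 2 ≤ (G.edgesIn S).ncard + 1) {a b c d : V}
    (ha : a ∈ S) (hb : b ∈ S) (hc : c ∈ S) (hd : d ∈ S) (hab : a ≠ b) (hcd : c ≠ d)
    (h₁ : ¬ G.Adj a b) (h₂ : ¬ G.Adj c d) : s(a, b) = s(c, d) := by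
  classical
  by_contra hne
  set P := S.offDiag.image Sym2.mk.uncurry
  have hmem : ∀ {x y}, x ∈ S → y ∈ S → x ≠ y → s(x, y) ∈ P := fun hx hy hxy =>
    Finset.mem_image.2 ⟨(_, _), Finset.mem_offDiag.2 ⟨hx, hy, hxy⟩, rfl⟩
  have hsub : G.edgesIn S ⊆ ↑((P.erase s(a, b)).erase s(c, d)) := by
    intro f hf
    have hfP := edgesIn_subset_image_offDiag S hf
    simp only [Finset.coe_erase, Set.mem_sdiff, Set.mem_singleton_iff]
    refine ⟨⟨hfP, ?_⟩, ?_⟩ <;> rintro rfl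
    exacts [h₁ hf.1, h₂ hf.1]
  have hle := Set.ncard_le_ncard hsub (Finset.finite_toSet _)
  have hP := congrArg (· + 1) (Finset.card_erase_add_one
    (Finset.mem_erase.2 ⟨fun h => hne h.symm, hmem hc hd hcd⟩))
  rw [Finset.card_erase_add_one (hmem ha hb hab), Sym2.card_image_offDiag] at hP
  rw [Set.ncard_coe_finset] at hle
  omega

lemma hasCommonNeighborsIn_of_card_eq_four {S : Finset V} (hS : S.card = 4)
    (hE : (G.edgesIn S).ncard = 5) : G.HasCommonNeighborsIn S := by
  classical
  intro x hx y hy hxy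
  by_contra! hno
  have hrest : ((S.erase x).erase y).card = 2 := by
    rw [Finset.card_erase_of_mem (Finset.mem_erase.2 ⟨hxy.symm, hy⟩),
      Finset.card_erase_of_mem hx, hS]
  obtain ⟨c, d, hcd, hcd_eq⟩ := Finset.card_eq_two.1 hrest
  have hnonadj : ∀ z ∈ (S.erase x).erase y,
      ∃ w, (w = x ∨ w = y) ∧ w ≠ z ∧ z ∈ S ∧ ¬ G.Adj w z := by
    intro z hz
    simp only [Finset.mem_erase] at hz
    by_cases hxz : G.Adj x z
    · exact ⟨y, Or.inr rfl, hz.1.symm, hz.2.2, hno z hz.2.2 hxz⟩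
    · exact ⟨x, Or.inl rfl, hz.2.1.symm, hz.2.2, hxz⟩
  obtain ⟨w, hw, hwc, hc, hwc'⟩ := hnonadj c (by simp [hcd_eq])
  obtain ⟨w', hw', hwd, hd, hwd'⟩ := hnonadj d (by simp [hcd_eq])
  have hdxy : d ≠ x ∧ d ≠ y := by
    have : d ∈ (S.erase x).erase y := by simp [hcd_eq]
    simp only [Finset.mem_erase] at this
    exact ⟨this.2.1, this.1⟩
  have hw_mem : w ∈ S := by rcases hw with rfl | rfl <;> assumption
  have hw'_mem : w' ∈ S := by rcases hw' with rfl | rfl <;> assumption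
  rcases Sym2.eq_iff.1 (eq_of_not_adj_of_choose_two_le (by rw [hS, hE]; rfl)
    hw_mem hc hw'_mem hd hwc hwd hwc' hwd') with ⟨-, h⟩ | ⟨h, -⟩
  · exact hcd h
  · rcases hw with rfl | rfl
    exacts [hdxy.1 h.symm, hdxy.2 h.symm]

lemma HasCommonNeighborsIn.exists_adj_adj {S : Finset V} (h : G.HasCommonNeighborsIn S)
    {x y : V} (hx : x ∈ S) (hy : y ∈ S) (hxy : x ≠ y) :
    ∃ z ∈ S, ∃ w ∈ S, z ≠ w ∧ G.Adj x z ∧ G.Adj x w := by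
  obtain ⟨z, hz, hxz, -⟩ := h x hx y hy hxy
  obtain ⟨w, hw, hxw, hzw⟩ := h x hx z hz hxz.ne
  exact ⟨z, hz, w, hw, hzw.ne, hxz, hxw⟩


lemma eq_of_adj_of_notMem [DecidableEq V] {x : V} [Fintype (G.neighborSet x)]
    (hdeg : G.degree x ≤ 3) {S : Finset V} {y z b c : V} (hy : y ∈ S) (hz : z ∈ S)
    (hyz : y ≠ z) (hxy : G.Adj x y) (hxz : G.Adj x z) (hb : G.Adj x b) (hc : G.Adj x c)
    (hbS : b ∉ S) (hcS : c ∉ S) : b = c := by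
  by_contra hbc
  have hin : ({y, z} : Finset V) ⊆ G.neighborFinset x ∩ S := by
    simp [Finset.insert_subset_iff, *]
  have hout : ({b, c} : Finset V) ⊆ G.neighborFinset x \ S := by
    simp [Finset.insert_subset_iff, *]
  have hsplit := Finset.card_inter_add_card_sdiff (G.neighborFinset x) S
  have h₁ := Finset.card_le_card hin
  have h₂ := Finset.card_le_card hout
  rw [Finset.card_pair hyz] at h₁
  rw [Finset.card_pair hbc] at h₂
  rw [card_neighborFinset_eq_degree] at hsplit
  omega

lemma ConnectedComponent.ncard_le_ncard_of_forall_exists_supp_eq [Finite G.ConnectedComponent]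
    {P : G.ConnectedComponent → Prop} {ι : Type*} {s : Set ι}
    {f : ι → Set V} (hf : s.InjOn f) (h : ∀ i ∈ s, ∃ c, P c ∧ c.supp = f i) :
    s.ncard ≤ {c | P c}.ncard := by
  calc s.ncard = (f '' s).ncard := hf.ncard_image.symm
    _ ≤ (ConnectedComponent.supp '' {c | P c}).ncard := by
      refine Set.ncard_le_ncard ?_ (Set.toFinite _)
      rintro _ ⟨i, hi, rfl⟩
      exact h i hi
    _ = {c | P c}.ncard := Set.ncard_image_of_injective _ ConnectedComponent.supp_injective

section Partition
variable {p : V → Finset V}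

lemma part_eq_of_triangle [G.LocallyFinite]
    (hp : ∀ x y, y ∈ p x ↔ p y = p x) (hdeg : ∀ v, G.degree v ≤ 3)
    (hnb : ∀ x, ∃ y ∈ p x, ∃ z ∈ p x, y ≠ z ∧ G.Adj x y ∧ G.Adj x z)
    {a b c : V} (hab : G.Adj a b) (hbc : G.Adj b c) (hac : G.Adj a c) : p a = p b := by
  classical
  have key : ∀ {a b c : V}, G.Adj a b → G.Adj a c → b ≠ c → p b ≠ p a → p c = p a := by
    intro a b c hab hac hbc hne
    by_contra hca
    obtain ⟨y, hy, z, hz, hyz, hay, haz⟩ := hnb a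
    exact hbc (eq_of_adj_of_notMem (hdeg a) hy hz hyz hay haz hab hac
      (mt (hp a b).1 hne) (mt (hp a c).1 hca))
  by_contra hne
  have hca := key hab hac hbc.ne (Ne.symm hne)
  have hcb := key hab.symm hbc hac.ne hne
  exact hne (hca.symm.trans hcb)

lemma mk_mem_nonTriangleEdges_iff [G.LocallyFinite]
    (hp : ∀ x y, y ∈ p x ↔ p y = p x) (hdeg : ∀ v, G.degree v ≤ 3)
    (hcn : ∀ x, G.HasCommonNeighborsIn (p x)) (hnt : ∀ x, (p x).Nontrivial)
    {x y : V} (hxy : G.Adj x y) : s(x, y) ∈ G.nonTriangleEdges ↔ p x ≠ p y := by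
  have hself : ∀ x, x ∈ p x := fun x => (hp x x).2 rfl
  have hnb : ∀ x, ∃ y ∈ p x, ∃ z ∈ p x, y ≠ z ∧ G.Adj x y ∧ G.Adj x z := fun x => by
    obtain ⟨y, hy, hyx⟩ := (hnt x).exists_ne x
    exact (hcn x).exists_adj_adj (hself x) hy hyx.symm
  refine ⟨fun ⟨_, hno⟩ hpxy => hno ?_, fun hpxy => ⟨hxy, ?_⟩⟩
  · obtain ⟨z, -, hxz, hyz⟩ := hcn x x (hself x) y ((hp x y).2 hpxy.symm) hxy.ne
    exact ⟨x, y, z, hxy, hyz, hxz, Or.inl rfl⟩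
  · rintro ⟨a, b, c, hab, hbc, hac, hf⟩
    have h₁ := part_eq_of_triangle hp hdeg hnb hab hbc hac
    have h₂ := part_eq_of_triangle hp hdeg hnb hbc hac.symm hab.symm
    simp only [Set.mem_insert_iff, Set.mem_singleton_iff, Sym2.eq_iff] at hf
    rcases hf with (⟨rfl, rfl⟩ | ⟨rfl, rfl⟩) | (⟨rfl, rfl⟩ | ⟨rfl, rfl⟩) |
      (⟨rfl, rfl⟩ | ⟨rfl, rfl⟩) <;> grind

variable {X : Set (Sym2 V)}

lemma deleteEdges_adj_iff_of_partition (hX : ∀ x y, G.Adj x y → (s(x, y) ∈ X ↔ p x ≠ p y))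
    {x y : V} : (G.deleteEdges X).Adj x y ↔ G.Adj x y ∧ p x = p y := by
  rw [deleteEdges_adj]
  exact and_congr_right fun h => (not_congr (hX x y h)).trans not_not

lemma reachable_deleteEdges_iff_of_partition (hp : ∀ x y, y ∈ p x ↔ p y = p x)
    (hcn : ∀ x, G.HasCommonNeighborsIn (p x))
    (hX : ∀ x y, G.Adj x y → (s(x, y) ∈ X ↔ p x ≠ p y)) {x y : V} :
    (G.deleteEdges X).Reachable x y ↔ p x = p y := by
  constructor
  · rintro ⟨w⟩
    induction w with
    | nil => rfl
    | cons h _ ih => exact ((deleteEdges_adj_iff_of_partition hX).1 h).2.trans ih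
  · intro hxy
    by_cases hne : x = y
    · exact hne ▸ Reachable.refl x
    obtain ⟨z, hz, hxz, hyz⟩ := hcn x x ((hp x x).2 rfl) y ((hp x y).2 hxy.symm) hne
    have hzx := (hp x z).1 hz
    exact ((deleteEdges_adj_iff_of_partition hX).2 ⟨hxz, hzx.symm⟩).reachable.trans
      ((deleteEdges_adj_iff_of_partition hX).2 ⟨hyz, (hzx.trans hxy).symm⟩).reachable.symm

lemma supp_connectedComponentMk_deleteEdges (hp : ∀ x y, y ∈ p x ↔ p y = p x)
    (hcn : ∀ x, G.HasCommonNeighborsIn (p x))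
    (hX : ∀ x y, G.Adj x y → (s(x, y) ∈ X ↔ p x ≠ p y)) (x : V) :
    ((G.deleteEdges X).connectedComponentMk x).supp = p x := by
  ext y
  rw [ConnectedComponent.mem_supp_iff, ConnectedComponent.eq, Finset.mem_coe, hp,
    reachable_comm, reachable_deleteEdges_iff_of_partition hp hcn hX, eq_comm]

lemma compBetti_connectedComponentMk_deleteEdges (hp : ∀ x y, y ∈ p x ↔ p y = p x)
    (hcn : ∀ x, G.HasCommonNeighborsIn (p x))
    (hX : ∀ x y, G.Adj x y → (s(x, y) ∈ X ↔ p x ≠ p y)) (x : V) :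
    compBetti (G.deleteEdges X) ((G.deleteEdges X).connectedComponentMk x) =
      ((G.edgesIn (p x)).ncard : ℤ) - (p x).card + 1 := by
  have hmk : ∀ v, (G.deleteEdges X).connectedComponentMk v =
      (G.deleteEdges X).connectedComponentMk x ↔ v ∈ p x := fun v => by
    rw [ConnectedComponent.eq, hp, reachable_deleteEdges_iff_of_partition hp hcn hX]
  have hE : {f | f ∈ (G.deleteEdges X).edgeSet ∧ ∀ v ∈ f,
      (G.deleteEdges X).connectedComponentMk v = (G.deleteEdges X).connectedComponentMk x} =
      G.edgesIn (p x) := by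
    ext ⟨a, b⟩
    simp only [Set.mem_ofPred_eq, edgesIn, mem_edgeSet, Sym2.forall_mem_pair, hmk, Finset.mem_coe,
      deleteEdges_adj_iff_of_partition hX]
    constructor
    · rintro ⟨⟨hab, -⟩, ha, hb⟩
      exact ⟨hab, ha, hb⟩
    · rintro ⟨hab, ha, hb⟩
      exact ⟨⟨hab, ((hp x a).1 ha).trans ((hp x b).1 hb).symm⟩, ha, hb⟩
  rw [compBetti, hE, supp_connectedComponentMk_deleteEdges hp hcn hX, Set.ncard_coe_finset]

end Partition

end SimpleGraph

namespace DiamondInflation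
variable {VH VG : Type*} [Fintype VH] [Fintype VG] [DecidableEq VH] [DecidableEq VG]
  {H : SimpleGraph VH} {G : SimpleGraph VG} {k : Sym2 VH → ℕ}

section
variable (D : DiamondInflation H G k)

def IsPiece (S : Finset VG) : Prop :=
  (∃ u, S = D.tri u) ∨ (∃ e ∈ H.edgeSet, ∃ i < k e, S = D.dia e i)

lemma exists_isPiece_mem (x : VG) : ∃ S, D.IsPiece S ∧ x ∈ S := by
  rcases D.pieces_cover x with ⟨u, hu⟩ | ⟨e, he, i, hi, hd⟩
  · exact ⟨D.tri u, Or.inl ⟨u, rfl⟩, hu⟩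
  · exact ⟨D.dia e i, Or.inr ⟨e, he, i, hi, rfl⟩, hd⟩

noncomputable def piece (x : VG) : Finset VG := (D.exists_isPiece_mem x).choose

lemma isPiece_piece (x : VG) : D.IsPiece (D.piece x) := (D.exists_isPiece_mem x).choose_spec.1

lemma mem_piece (x : VG) : x ∈ D.piece x := (D.exists_isPiece_mem x).choose_spec.2

variable {D}

lemma IsPiece.eq_of_mem {S S' : Finset VG} (hS : D.IsPiece S) (hS' : D.IsPiece S') {x : VG}
    (h : x ∈ S) (h' : x ∈ S') : S = S' := by
  by_contra hne
  refine Finset.disjoint_left.1 ?_ h h'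
  rcases hS with ⟨u, rfl⟩ | ⟨e, he, i, hi, rfl⟩ <;>
    rcases hS' with ⟨u', rfl⟩ | ⟨e', he', i', hi', rfl⟩
  · exact D.tri_disj u u' (by rintro rfl; exact hne rfl)
  · exact D.tri_dia_disj u e' he' i' hi'
  · exact (D.tri_dia_disj u' e he i hi).symm
  · exact D.dia_disj e he e' he' i hi i' hi' (not_and_or.1 (by rintro ⟨rfl, rfl⟩; exact hne rfl))

lemma IsPiece.hasCommonNeighborsIn {S : Finset VG} (hS : D.IsPiece S) :
    G.HasCommonNeighborsIn S := by
  rcases hS with ⟨u, rfl⟩ | ⟨e, he, i, hi, rfl⟩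
  · exact IsClique.hasCommonNeighborsIn (D.tri_adj u) (D.tri_card u).ge
  · exact hasCommonNeighborsIn_of_card_eq_four (D.dia_card e he i hi) (D.dia_edges e he i hi)

lemma IsPiece.nontrivial {S : Finset VG} (hS : D.IsPiece S) : S.Nontrivial := by
  rw [← Finset.one_lt_card_iff_nontrivial]
  rcases hS with ⟨u, rfl⟩ | ⟨e, he, i, hi, rfl⟩
  · simp [D.tri_card u]
  · simp [D.dia_card e he i hi]

variable (D)

lemma piece_eq_of_mem {S : Finset VG} {x : VG} (hS : D.IsPiece S) (h : x ∈ S) :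
    D.piece x = S :=
  (D.isPiece_piece x).eq_of_mem hS (D.mem_piece x) h

lemma mem_piece_iff (x y : VG) : y ∈ D.piece x ↔ D.piece y = D.piece x :=
  ⟨D.piece_eq_of_mem (D.isPiece_piece x), fun h => h ▸ D.mem_piece y⟩

lemma tri_injective : Function.Injective D.tri := by
  intro u u' h
  by_contra hne
  obtain ⟨x, hx⟩ := Finset.card_pos.1 (by rw [D.tri_card u]; omega)
  exact Finset.disjoint_left.1 (D.tri_disj u u' hne) hx (h ▸ hx)

lemma injOn_dia :
    Set.InjOn (fun p : (_ : Sym2 VH) × ℕ => D.dia p.1 p.2)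
      {p | p.1 ∈ H.edgeSet ∧ p.2 < k p.1} := by
  rintro ⟨e, i⟩ ⟨he, hi⟩ ⟨e', i'⟩ ⟨he', hi'⟩ h
  dsimp only at h
  by_contra hne
  obtain ⟨x, hx⟩ := Finset.card_pos.1 (by rw [D.dia_card e he i hi]; omega)
  refine Finset.disjoint_left.1 (D.dia_disj e he e' he' i hi i' hi' ?_) hx (h ▸ hx)
  exact not_and_or.1 (by rintro ⟨rfl, rfl⟩; exact hne rfl)

variable [DecidableRel G.Adj]

lemma mem_nonTriangleEdges_iff_piece_ne (hG : ∀ v, G.degree v ≤ 3) (x y : VG)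
    (hxy : G.Adj x y) : s(x, y) ∈ G.nonTriangleEdges ↔ D.piece x ≠ D.piece y :=
  mk_mem_nonTriangleEdges_iff D.mem_piece_iff hG
    (fun x => (D.isPiece_piece x).hasCommonNeighborsIn) (fun x => (D.isPiece_piece x).nontrivial)
    hxy

lemma supp_connectedComponentMk (hG : ∀ v, G.degree v ≤ 3) {S : Finset VG}
    (hS : D.IsPiece S) {x : VG} (hx : x ∈ S) :
    ((G.deleteEdges G.nonTriangleEdges).connectedComponentMk x).supp = S := by
  rw [supp_connectedComponentMk_deleteEdges D.mem_piece_iff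
    (fun x => (D.isPiece_piece x).hasCommonNeighborsIn)
    (D.mem_nonTriangleEdges_iff_piece_ne hG), D.piece_eq_of_mem hS hx]

lemma compBetti_connectedComponentMk (hG : ∀ v, G.degree v ≤ 3) {S : Finset VG}
    (hS : D.IsPiece S) {x : VG} (hx : x ∈ S) :
    compBetti (G.deleteEdges G.nonTriangleEdges)
        ((G.deleteEdges G.nonTriangleEdges).connectedComponentMk x) =
      ((G.edgesIn S).ncard : ℤ) - S.card + 1 := by
  rw [compBetti_connectedComponentMk_deleteEdges D.mem_piece_iff
    (fun x => (D.isPiece_piece x).hasCommonNeighborsIn)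
    (D.mem_nonTriangleEdges_iff_piece_ne hG), D.piece_eq_of_mem hS hx]

lemma compBetti_of_mem_tri (hG : ∀ v, G.degree v ≤ 3) {u : VH} {x : VG} (hx : x ∈ D.tri u) :
    compBetti (G.deleteEdges G.nonTriangleEdges)
      ((G.deleteEdges G.nonTriangleEdges).connectedComponentMk x) = 1 := by
  rw [D.compBetti_connectedComponentMk hG (Or.inl ⟨u, rfl⟩) hx,
    IsClique.ncard_edgesIn (D.tri_adj u), D.tri_card u]
  norm_num

lemma compBetti_of_mem_dia (hG : ∀ v, G.degree v ≤ 3) {e : Sym2 VH} (he : e ∈ H.edgeSet)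
    {i : ℕ} (hi : i < k e) {x : VG} (hx : x ∈ D.dia e i) :
    compBetti (G.deleteEdges G.nonTriangleEdges)
      ((G.deleteEdges G.nonTriangleEdges).connectedComponentMk x) = 2 := by
  rw [D.compBetti_connectedComponentMk hG (Or.inr ⟨e, he, i, hi, rfl⟩) hx,
    show (G.edgesIn (D.dia e i)).ncard = 5 from D.dia_edges e he i hi, D.dia_card e he i hi]
  norm_num

end

variable [DecidableRel G.Adj]

lemma card_le_ncard_odd_compBetti (D : DiamondInflation H G k) (hG : ∀ v, G.degree v ≤ 3) :
    Fintype.card VH ≤ {c : (G.deleteEdges G.nonTriangleEdges).ConnectedComponent |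
      Odd (compBetti (G.deleteEdges G.nonTriangleEdges) c)}.ncard := by
  rw [← Nat.card_eq_fintype_card, ← Set.ncard_univ]
  refine ConnectedComponent.ncard_le_ncard_of_forall_exists_supp_eq
    (Finset.coe_injective.comp D.tri_injective).injOn fun u _ => ?_
  obtain ⟨x, hx⟩ := Finset.card_pos.1 (by rw [D.tri_card u]; omega)
  refine ⟨_, ?_, D.supp_connectedComponentMk hG (Or.inl ⟨u, rfl⟩) hx⟩
  rw [D.compBetti_of_mem_tri hG hx]
  exact odd_one

lemma sum_le_ncard_even_compBetti [DecidableRel H.Adj] (D : DiamondInflation H G k)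
    (hG : ∀ v, G.degree v ≤ 3) :
    ∑ e ∈ H.edgeFinset, k e ≤ {c : (G.deleteEdges G.nonTriangleEdges).ConnectedComponent |
      Even (compBetti (G.deleteEdges G.nonTriangleEdges) c)}.ncard := by
  have hsum : ∑ e ∈ H.edgeFinset, k e =
      ({p | p.1 ∈ H.edgeSet ∧ p.2 < k p.1} : Set ((_ : Sym2 VH) × ℕ)).ncard := by
    have hset : ({p | p.1 ∈ H.edgeSet ∧ p.2 < k p.1} : Set ((_ : Sym2 VH) × ℕ)) =
        ↑(H.edgeFinset.sigma fun e => Finset.range (k e)) := by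
      ext ⟨e, i⟩
      simp
    rw [hset, Set.ncard_coe_finset, Finset.card_sigma]
    simp
  rw [hsum]
  refine ConnectedComponent.ncard_le_ncard_of_forall_exists_supp_eq
    (Finset.coe_injective.comp_injOn D.injOn_dia) fun ⟨e, i⟩ ⟨he, hi⟩ => ?_
  obtain ⟨x, hx⟩ := Finset.card_pos.1 (by rw [D.dia_card e he i hi]; omega)
  refine ⟨_, ?_, D.supp_connectedComponentMk hG (Or.inr ⟨e, he, i, hi, rfl⟩) hx⟩
  rw [D.compBetti_of_mem_dia hG he hi hx]
  exact even_two

lemma nonTriangleEdges_subset_biUnion_cross [DecidableRel H.Adj] (D : DiamondInflation H G k)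
    (hG : ∀ v, G.degree v ≤ 3) :
    G.nonTriangleEdges ⊆ ↑(H.edgeFinset.biUnion D.cross) := by
  rintro ⟨a, b⟩ hf
  have hne := (D.mem_nonTriangleEdges_iff_piece_ne hG a b hf.1).1 hf
  have hsplit : ∀ S, D.IsPiece S → (∀ v ∈ s(a, b), v ∈ S) → False := fun S hS hab =>
    hne ((D.piece_eq_of_mem hS (hab a (Sym2.mem_mk_left a b))).trans
      (D.piece_eq_of_mem hS (hab b (Sym2.mem_mk_right a b))).symm)
  rcases D.edge_classify _ hf.1 with ⟨u, hu⟩ | ⟨e, he, i, hi, hd⟩ | ⟨e, ⟨he, hce⟩, -⟩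
  · exact (hsplit _ (Or.inl ⟨u, rfl⟩) hu).elim
  · exact (hsplit _ (Or.inr ⟨e, he, i, hi, rfl⟩) hd).elim
  · exact Finset.mem_coe.2 (Finset.mem_biUnion.2 ⟨e, mem_edgeFinset.2 he, hce⟩)

lemma ncard_nonTriangleEdges_le [DecidableRel H.Adj] (D : DiamondInflation H G k)
    (hG : ∀ v, G.degree v ≤ 3) :
    G.nonTriangleEdges.ncard ≤ ∑ e ∈ H.edgeFinset, k e + H.edgeFinset.card :=
  calc G.nonTriangleEdges.ncard ≤ (H.edgeFinset.biUnion D.cross).card := by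
        rw [← Set.ncard_coe_finset]
        exact Set.ncard_le_ncard (D.nonTriangleEdges_subset_biUnion_cross hG)
    _ ≤ ∑ e ∈ H.edgeFinset, (D.cross e).card := Finset.card_biUnion_le
    _ = ∑ e ∈ H.edgeFinset, (k e + 1) :=
        Finset.sum_congr rfl fun e he => D.cross_card e (mem_edgeFinset.1 he)
    _ = ∑ e ∈ H.edgeFinset, k e + H.edgeFinset.card := by
        rw [Finset.sum_add_distrib, Finset.card_eq_sum_ones]

end DiamondInflation

theorem stmt15_general {VH VG : Type*} [Fintype VH] [Fintype VG]
    [DecidableEq VH] [DecidableEq VG]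
    (H : SimpleGraph VH) (G : SimpleGraph VG)
    [DecidableRel H.Adj] [DecidableRel G.Adj]
    (hHcubic : ∀ v, H.degree v = 3)
    (hGcubic : ∀ v, G.degree v = 3)
    (k : Sym2 VH → ℕ)
    (D : DiamondInflation H G k)
    (X : Set (Sym2 VG))
    (hX : X = {f | f ∈ G.edgeSet ∧ ¬ ∃ x y z : VG,
      G.Adj x y ∧ G.Adj y z ∧ G.Adj x z ∧
      f ∈ ({s(x, y), s(y, z), s(x, z)} : Set (Sym2 VG))})
    (hNeb : ({c : (G.deleteEdges X).ConnectedComponent |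
        Even (compBetti (G.deleteEdges X) c)}.ncard : ℤ)
      + 2 * ({c : (G.deleteEdges X).ConnectedComponent |
        Odd (compBetti (G.deleteEdges X) c)}.ncard : ℤ) - 2 ≤ (X.ncard : ℤ)) :
    Fintype.card VH ≤ 4 := by
  obtain rfl : X = G.nonTriangleEdges := hX
  have hG : ∀ v, G.degree v ≤ 3 := fun v => (hGcubic v).le
  have hodd := D.card_le_ncard_odd_compBetti hG
  have heven := D.sum_le_ncard_even_compBetti hG
  have hXcard := D.ncard_nonTriangleEdges_le hG
  have hhandshake := H.sum_degrees_eq_twice_card_edges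
  simp only [hHcubic, Finset.sum_const, Finset.card_univ, smul_eq_mul] at hhandshake
  omega

/-- For `G` obtained from a 2-edge-connected cubic graph `H` on `n` vertices by inflating
every vertex to a triangle and replacing each edge by a string of diamonds of positive
length: if Nebeský's inequality `ec(G−X) + 2·oc(G−X) − 2 ≤ |X|` holds for the set `X` of
edges of `G` on no triangle, then `n ≤ 4`. -/
theorem stmt15 {VH VG : Type*} [Fintype VH] [Fintype VG]
    [DecidableEq VH] [DecidableEq VG]
    (H : SimpleGraph VH) (G : SimpleGraph VG)
    [DecidableRel H.Adj] [DecidableRel G.Adj]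
    (hHconn : H.Connected) (hHcubic : ∀ v, H.degree v = 3)
    (hH2ec : ∀ f ∈ H.edgeFinset, (H.deleteEdges {f}).Connected)
    (hGconn : G.Connected) (hGcubic : ∀ v, G.degree v = 3)
    (k : Sym2 VH → ℕ) (hk : ∀ e ∈ H.edgeSet, 1 ≤ k e)
    (D : DiamondInflation H G k)
    (X : Set (Sym2 VG))
    (hX : X = {f | f ∈ G.edgeSet ∧ ¬ ∃ x y z : VG,
      G.Adj x y ∧ G.Adj y z ∧ G.Adj x z ∧
      f ∈ ({s(x, y), s(y, z), s(x, z)} : Set (Sym2 VG))})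
    (hNeb : ({c : (G.deleteEdges X).ConnectedComponent |
        Even (compBetti (G.deleteEdges X) c)}.ncard : ℤ)
      + 2 * ({c : (G.deleteEdges X).ConnectedComponent |
        Odd (compBetti (G.deleteEdges X) c)}.ncard : ℤ) - 2 ≤ (X.ncard : ℤ)) :
    Fintype.card VH ≤ 4 :=
  stmt15_general H G hHcubic hGcubic k D X hX hNeb
end
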